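/- For every α > 1, setting g : ℕ → ℕ by g(t) = ⌈32·α⌉·t², the class Q_g is not η-subtractive α-robustly learnable for any η with 0 < η ≤ 1/(16α). -/

import Mathlib

open scoped BigOperators ENNReal

namespace RobustDistLearn

variable {X : Type*}

/-- `p` is a probability mass function on `X`. -/
def IsPMF (p : X → ℝ) : Prop := (∀ x, 0 ≤ p x) ∧ ∑' x, p x = 1

/-- Total variation distance between two mass functions:
`d_TV(p,q) = (1/2)·∑ₓ |p x − q x|`. -/
noncomputable def dTV (p q : X → ℝ) : ℝ := (1 / 2) * ∑' x, |p x - q x|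

/-- The probability, over a sample `S` of `n` i.i.d. draws from `p`, of the event `E`. -/
noncomputable def iidProb (p : X → ℝ) (n : ℕ) (E : Set (Fin n → X)) : ℝ :=
  ∑' S : Fin n → X, E.indicator (fun T => ∏ i, p (T i)) S

/-- The mixture `η·q + (1−η)·p`. -/
def mix (η : ℝ) (q p : X → ℝ) : X → ℝ := fun x => η * q x + (1 - η) * p x

/-- `inf_{p' ∈ C} d_TV(p, p')`. -/
noncomputable def distToClass (p : X → ℝ) (C : Set (X → ℝ)) : ℝ := sInf (dTV p '' C)

/-- A learner maps, for each sample size `n`, a tuple `S ∈ Xⁿ` to a distribution over `X`. -/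
def IsLearner (A : (n : ℕ) → (Fin n → X) → (X → ℝ)) : Prop := ∀ n S, IsPMF (A n S)

/-- Realizable learnability of a class `C` of distributions. -/
def RealizablyLearnable (C : Set (X → ℝ)) : Prop :=
  ∃ A : (n : ℕ) → (Fin n → X) → (X → ℝ), IsLearner A ∧
    ∃ nC : ℝ → ℝ → ℕ,
      ∀ p ∈ C, ∀ ε ∈ Set.Ioo (0:ℝ) 1, ∀ δ ∈ Set.Ioo (0:ℝ) 1, ∀ n : ℕ, nC ε δ ≤ n →
        1 - δ ≤ iidProb p n {S | dTV (A n S) p ≤ ε}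

/-- `α`-robust (agnostic) learnability. -/
def RobustlyLearnable (C : Set (X → ℝ)) (α : ℝ) : Prop :=
  ∃ A : (n : ℕ) → (Fin n → X) → (X → ℝ), IsLearner A ∧
    ∃ nC : ℝ → ℝ → ℕ,
      ∀ p : X → ℝ, IsPMF p → ∀ ε ∈ Set.Ioo (0:ℝ) 1, ∀ δ ∈ Set.Ioo (0:ℝ) 1, ∀ n : ℕ, nC ε δ ≤ n →
        1 - δ ≤ iidProb p n {S | dTV (A n S) p ≤ α * distToClass p C + ε}

/-- Additive `α`-robust learnability. -/
def AdditiveRobustlyLearnable (C : Set (X → ℝ)) (α : ℝ) : Prop :=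
  ∃ A : (n : ℕ) → (Fin n → X) → (X → ℝ), IsLearner A ∧
    ∃ nC : ℝ → ℝ → ℕ,
      ∀ η ∈ Set.Ioo (0:ℝ) 1, ∀ q : X → ℝ, IsPMF q → ∀ p ∈ C,
        ∀ ε ∈ Set.Ioo (0:ℝ) 1, ∀ δ ∈ Set.Ioo (0:ℝ) 1, ∀ n : ℕ, nC ε δ ≤ n →
          1 - δ ≤ iidProb (mix η q p) n {S | dTV (A n S) (mix η q p) ≤ α * η + ε}

/-- Huber additive `α`-robust learnability: the guarantee is with respect to the clean `p`. -/
def HuberAdditiveRobustlyLearnable (C : Set (X → ℝ)) (α : ℝ) : Prop :=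
  ∃ A : (n : ℕ) → (Fin n → X) → (X → ℝ), IsLearner A ∧
    ∃ nC : ℝ → ℝ → ℕ,
      ∀ η ∈ Set.Ioo (0:ℝ) 1, ∀ q : X → ℝ, IsPMF q → ∀ p ∈ C,
        ∀ ε ∈ Set.Ioo (0:ℝ) 1, ∀ δ ∈ Set.Ioo (0:ℝ) 1, ∀ n : ℕ, nC ε δ ≤ n →
          1 - δ ≤ iidProb (mix η q p) n {S | dTV (A n S) p ≤ α * η + ε}

/-- Subtractive `α`-robust learnability. -/
def SubtractiveRobustlyLearnable (C : Set (X → ℝ)) (α : ℝ) : Prop :=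
  ∃ A : (n : ℕ) → (Fin n → X) → (X → ℝ), IsLearner A ∧
    ∃ nC : ℝ → ℝ → ℕ,
      ∀ η ∈ Set.Ioo (0:ℝ) 1, ∀ p : X → ℝ, IsPMF p →
        (∃ q : X → ℝ, IsPMF q ∧ mix η q p ∈ C) →
        ∀ ε ∈ Set.Ioo (0:ℝ) 1, ∀ δ ∈ Set.Ioo (0:ℝ) 1, ∀ n : ℕ, nC ε δ ≤ n →
          1 - δ ≤ iidProb p n {S | dTV (A n S) p ≤ α * η + ε}

/-- `η`-`α`-robust learnability (known corruption level `η`). -/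
def EtaRobustlyLearnable (C : Set (X → ℝ)) (η α : ℝ) : Prop :=
  ∃ A : (n : ℕ) → (Fin n → X) → (X → ℝ), IsLearner A ∧
    ∃ nC : ℝ → ℝ → ℕ,
      ∀ p : X → ℝ, IsPMF p → distToClass p C ≤ η →
        ∀ ε ∈ Set.Ioo (0:ℝ) 1, ∀ δ ∈ Set.Ioo (0:ℝ) 1, ∀ n : ℕ, nC ε δ ≤ n →
          1 - δ ≤ iidProb p n {S | dTV (A n S) p ≤ α * η + ε}

/-- `η`-additive `α`-robust learnability (known corruption level `η`). -/
def EtaAdditiveRobustlyLearnable (C : Set (X → ℝ)) (η α : ℝ) : Prop :=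
  ∃ A : (n : ℕ) → (Fin n → X) → (X → ℝ), IsLearner A ∧
    ∃ nC : ℝ → ℝ → ℕ,
      ∀ q : X → ℝ, IsPMF q → ∀ p ∈ C,
        ∀ ε ∈ Set.Ioo (0:ℝ) 1, ∀ δ ∈ Set.Ioo (0:ℝ) 1, ∀ n : ℕ, nC ε δ ≤ n →
          1 - δ ≤ iidProb (mix η q p) n {S | dTV (A n S) (mix η q p) ≤ α * η + ε}

/-- `η`-subtractive `α`-robust learnability (known corruption level `η`). -/
def EtaSubtractiveRobustlyLearnable (C : Set (X → ℝ)) (η α : ℝ) : Prop :=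
  ∃ A : (n : ℕ) → (Fin n → X) → (X → ℝ), IsLearner A ∧
    ∃ nC : ℝ → ℝ → ℕ,
      ∀ p : X → ℝ, IsPMF p →
        (∃ q : X → ℝ, IsPMF q ∧ mix η q p ∈ C) →
        ∀ ε ∈ Set.Ioo (0:ℝ) 1, ∀ δ ∈ Set.Ioo (0:ℝ) 1, ∀ n : ℕ, nC ε δ ≤ n →
          1 - δ ≤ iidProb p n {S | dTV (A n S) p ≤ α * η + ε}

/-- The probability of an event under a `PMF`. -/
noncomputable def pmfProb {Y : Type*} (m : PMF Y) (E : Set Y) : ℝ :=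
  (m.toOuterMeasure E).toReal

/-- `(ε,δ)`-differential privacy of a randomized algorithm on inputs of size `n`. -/
def IsDP {Y : Type*} {n : ℕ} (M : (Fin n → X) → PMF Y) (ε δ : ℝ) : Prop :=
  ∀ x x' : Fin n → X, (∃ i : Fin n, ∀ j : Fin n, j ≠ i → x j = x' j) →
    ∀ B : Set Y,
      (M x).toOuterMeasure B ≤
        ENNReal.ofReal (Real.exp ε) * (M x').toOuterMeasure B + ENNReal.ofReal δ

/-- Probability, jointly over `S ~ pⁿ` and the internal randomness of `M`, of the event `E`
on the output of `M`. -/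
noncomputable def randIidProb {Y : Type*} (p : X → ℝ) (n : ℕ)
    (M : (Fin n → X) → PMF Y) (E : Set Y) : ℝ :=
  ∑' S : Fin n → X, (∏ i, p (S i)) * pmfProb (M S) E

/-- Approximate DP learnability. -/
def ApproxDPLearnable (C : Set (X → ℝ)) : Prop :=
  ∃ Alg : (n : ℕ) → (Fin n → X) → PMF (X → ℝ),
    (∀ n S f, f ∈ (Alg n S).support → IsPMF f) ∧
    ∃ nC : ℝ → ℝ → ℝ → ℝ → ℕ,
      ∀ p ∈ C, ∀ α ∈ Set.Ioo (0:ℝ) 1, ∀ β ∈ Set.Ioo (0:ℝ) 1,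
        ∀ ε ∈ Set.Ioo (0:ℝ) 1, ∀ δ ∈ Set.Ioo (0:ℝ) 1, ∀ n : ℕ, nC α β ε δ ≤ n →
          IsDP (Alg n) ε δ ∧
          1 - β ≤ randIidProb p n (Alg n) {f | dTV p f ≤ α}

/-- Pure DP learnability. -/
def PureDPLearnable (C : Set (X → ℝ)) : Prop :=
  ∃ Alg : (n : ℕ) → (Fin n → X) → PMF (X → ℝ),
    (∀ n S f, f ∈ (Alg n S).support → IsPMF f) ∧
    ∃ nC : ℝ → ℝ → ℝ → ℕ,
      ∀ p ∈ C, ∀ α ∈ Set.Ioo (0:ℝ) 1, ∀ β ∈ Set.Ioo (0:ℝ) 1, ∀ ε ∈ Set.Ioo (0:ℝ) 1,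
        ∀ n : ℕ, nC α β ε ≤ n →
          IsDP (Alg n) ε 0 ∧
          1 - β ≤ randIidProb p n (Alg n) {f | dTV p f ≤ α}

/-- `α`-robust learnability by a possibly randomized learner. -/
def RandRobustlyLearnable (C : Set (X → ℝ)) (α : ℝ) : Prop :=
  ∃ Alg : (n : ℕ) → (Fin n → X) → PMF (X → ℝ),
    (∀ n S f, f ∈ (Alg n S).support → IsPMF f) ∧
    ∃ nC : ℝ → ℝ → ℕ,
      ∀ p : X → ℝ, IsPMF p → ∀ ε ∈ Set.Ioo (0:ℝ) 1, ∀ δ ∈ Set.Ioo (0:ℝ) 1,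
        ∀ n : ℕ, nC ε δ ≤ n →
          1 - δ ≤ randIidProb p n (Alg n) {f | dTV f p ≤ α * distToClass p C + ε}

/-- A class `C` admits `(τ, t, nf)` `r`-robust sample compression. -/
def AdmitsCompression (C : Set (X → ℝ)) (τ t nf : ℝ → ℕ) (r : ℝ) : Prop :=
  ∃ J : List X → List Bool → (X → ℝ),
    (∀ L B, J L B ∈ C) ∧
    ∀ q ∈ C, ∀ p : X → ℝ, IsPMF p → dTV p q ≤ r →
      ∀ ε ∈ Set.Ioo (0:ℝ) 1,
        (2 : ℝ) / 3 ≤ iidProb p (nf ε)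
          {S | ∃ L : List X, ∃ B : List Bool,
            L.length ≤ τ ε ∧ (∀ x ∈ L, ∃ i, S i = x) ∧ B.length ≤ t ε ∧
            dTV (J L B) q ≤ r + ε}

/-- The distribution `q_{i,j,k} = (1−1/j)·δ_{(0,0)} + (1/j − 1/k)·U_{A_i×{2j+1}} + (1/k)·δ_{(i,2j+2)}`
over `ℕ × ℕ`, for a given enumeration `A` of the finite nonempty subsets of `ℕ`. -/
noncomputable def qDist (A : ℕ → Finset ℕ) (i j k : ℕ) : ℕ × ℕ → ℝ := fun x =>
  (if x = (0, 0) then 1 - 1 / (j : ℝ) else 0) +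
  (if x.1 ∈ A i ∧ x.2 = 2 * j + 1 then (1 / (j : ℝ) - 1 / (k : ℝ)) / ((A i).card : ℝ) else 0) +
  (if x = (i, 2 * j + 2) then 1 / (k : ℝ) else 0)

/-- The class `Q_g = {q_{i,j,g(j)} : i, j ∈ ℕ, j ≥ 1}`. -/
def Qg (A : ℕ → Finset ℕ) (g : ℕ → ℕ) : Set (ℕ × ℕ → ℝ) :=
  {p | ∃ i j : ℕ, 1 ≤ j ∧ p = qDist A i j (g j)}

/-- The distribution `(1−γ)·δ_{(0,0)} + γ·U_{B×{2j+1}}` over `ℕ × ℕ`. -/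
noncomputable def pDist (γ : ℝ) (B : Finset ℕ) (j : ℕ) : ℕ × ℕ → ℝ := fun x =>
  (if x = (0, 0) then 1 - γ else 0) +
  (if x.1 ∈ B ∧ x.2 = 2 * j + 1 then γ / (B.card : ℝ) else 0)

/-- `g : ℕ → ℕ` is superlinear: `g(t)/t → ∞`. -/
def Superlinear (g : ℕ → ℕ) : Prop :=
  Filter.Tendsto (fun t : ℕ => (g t : ℝ) / (t : ℝ)) Filter.atTop Filter.atTop

/-!
For a block `T ⊆ ℕ`, `p_T = (1 - γ)·δ_{(0,0)} + γ·U_{T×{2j+1}}` is obtained from `q_{i,j,k}`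
(`A i = T`, `k = ⌈32α⌉ j²`) by removing an `η`-fraction of its mass as soon as the atom `(i, 2j+2)`,
of mass `1/k`, fits into that fraction; because `g` is quadratic, this allows a block mass
`γ ≈ 1/j` far above `αη`. A sample of size `n` reveals a set `V` of at most `n` columns of `T` and
has the same likelihood under every `N`-block containing `V`. An output `r`-close to `p_T` puts
mass at least `γ/2 - 2r` on `T \ V`, so by double counting it is `r`-close to `p_T` for at most a
third of the `N`-subsets `T ⊇ V` of `[0, M)` once `n ≪ N ≪ M`. Averaging over `T`, some `p_T` is
learned with probability below `1/2`.
-/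

open Finset

lemma IsPMF.summable {f : X → ℝ} (hf : IsPMF f) : Summable f := by
  by_contra h
  simpa [tsum_eq_zero_of_not_summable h] using hf.2

lemma IsPMF.sum_comp_le_one {Y : Type*} {f : X → ℝ} (hf : IsPMF f) {e : Y → X}
    (he : Function.Injective e) (s : Finset Y) : ∑ y ∈ s, f (e y) ≤ 1 := by
  classical
  rw [← sum_image fun x _ y _ h => he h, ← hf.2]
  exact hf.summable.sum_le_tsum _ fun x _ => hf.1 x

lemma sum_abs_sub_le_two_mul_dTV {f p : X → ℝ} (hf : Summable f) (hp : Summable p)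
    (s : Finset X) : ∑ x ∈ s, |f x - p x| ≤ 2 * dTV f p := by
  have : ∑ x ∈ s, |f x - p x| ≤ ∑' x, |f x - p x| :=
    (hf.sub hp).abs.sum_le_tsum s fun x _ => abs_nonneg _
  unfold dTV
  linarith

lemma iidProb_eq_sum_piFinset {p : X → ℝ} {s : Finset X} (hp : ∀ x ∉ s, p x = 0) (n : ℕ)
    (E : Set (Fin n → X)) :
    iidProb p n E = ∑ S ∈ Fintype.piFinset fun _ => s, E.indicator (fun T => ∏ i, p (T i)) S := by
  refine tsum_eq_sum fun S hS => ?_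
  obtain ⟨i, hi⟩ : ∃ i, S i ∉ s := by simpa [Fintype.mem_piFinset] using hS
  have hzero : ∏ i, p (S i) = 0 := prod_eq_zero (mem_univ i) (hp _ hi)
  simp [hzero]

lemma _root_.Finset.sum_sum_sdiff_filter_powersetCard_subset {α : Type*} [DecidableEq α]
    {s t : Finset α} {n : ℕ} (hst : s ⊆ t) (hsN : #s < n) (w : α → ℝ) :
    ∑ T ∈ (t.powersetCard n).filter (s ⊆ ·), ∑ x ∈ T \ s, w x =
      ((#t - #s - 1).choose (n - #s - 1) : ℝ) * ∑ x ∈ t \ s, w x := by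
  have hT : ∀ T ∈ (t.powersetCard n).filter (s ⊆ ·),
      ∑ x ∈ T \ s, w x = ∑ x ∈ t \ s, if x ∈ T then w x else 0 := by
    intro T hT
    have hTt := (mem_powersetCard.mp (mem_filter.mp hT).1).1
    rw [← sum_filter]
    congr 1
    ext x
    simp only [mem_sdiff, mem_filter]
    exact ⟨fun h => ⟨⟨hTt h.1, h.2⟩, h.1⟩, fun h => ⟨h.2, h.1.2⟩⟩
  rw [sum_congr rfl hT, sum_comm, mul_sum]
  refine sum_congr rfl fun x hx => ?_
  obtain ⟨hxt, hxs⟩ := mem_sdiff.mp hx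
  rw [← sum_filter, sum_const, nsmul_eq_mul, filter_filter, mul_comm]
  have hins : ((t.powersetCard n).filter fun T => s ⊆ T ∧ x ∈ T) =
      (t.powersetCard n).filter (insert x s ⊆ ·) :=
    filter_congr fun T _ => by rw [insert_subset_iff, and_comm]
  rw [hins, card_filter_powersetCard_subset _ _ _ (insert_subset hxt hst)
    (by rw [card_insert_of_notMem hxs]; omega), card_insert_of_notMem hxs]
  simp only [Nat.sub_sub]
  ring

lemma _root_.Nat.choose_sub_one_mul {m k : ℕ} (hk : 1 ≤ k) :
    (m - 1).choose (k - 1) * m = m.choose k * k := by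
  obtain ⟨k, rfl⟩ := Nat.exists_eq_add_of_le' hk
  rcases m with _ | m
  · simp
  · simpa [mul_comm] using Nat.add_one_mul_choose_eq m k

lemma hasSum_ite_row (B : Finset ℕ) (m : ℕ) (d : ℝ) :
    HasSum (fun x : ℕ × ℕ => if x.1 ∈ B ∧ x.2 = m then d else 0) (#B * d) := by
  have hzero : ∀ x ∉ B.image (·, m), (if x.1 ∈ B ∧ x.2 = m then d else 0) = 0 := by
    rintro x hx
    rw [if_neg]
    rintro ⟨h1, h2⟩
    exact hx (mem_image.mpr ⟨x.1, h1, by rw [← h2]⟩)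
  convert (hasSum_sum_of_ne_finset_zero hzero : HasSum _ _) using 1
  rw [sum_image fun x _ y _ h => (Prod.ext_iff.mp h).1]
  simp

lemma hasSum_pDist {B : Finset ℕ} (hB : B.Nonempty) (γ : ℝ) (j : ℕ) :
    HasSum (pDist γ B j) 1 := by
  have h : HasSum (pDist γ B j) ((1 - γ) + #B * (γ / #B)) :=
    (hasSum_ite_eq ((0, 0) : ℕ × ℕ) (1 - γ)).add (hasSum_ite_row B (2 * j + 1) (γ / #B))
  convert h using 1
  have : (#B : ℝ) ≠ 0 := by exact_mod_cast hB.card_pos.ne'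
  field_simp
  ring

lemma hasSum_qDist (A : ℕ → Finset ℕ) {i : ℕ} (hA : (A i).Nonempty) (j k : ℕ) :
    HasSum (qDist A i j k) 1 := by
  have h : HasSum (qDist A i j k)
      ((1 - 1 / (j : ℝ)) + #(A i) * ((1 / (j : ℝ) - 1 / k) / #(A i)) + 1 / (k : ℝ)) :=
    ((hasSum_ite_eq ((0, 0) : ℕ × ℕ) (1 - 1 / (j : ℝ))).add
      (hasSum_ite_row (A i) (2 * j + 1) ((1 / (j : ℝ) - 1 / k) / #(A i)))).add
      (hasSum_ite_eq ((i, 2 * j + 2) : ℕ × ℕ) (1 / (k : ℝ)))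
  convert h using 1
  have : (#(A i) : ℝ) ≠ 0 := by exact_mod_cast hA.card_pos.ne'
  field_simp
  ring

lemma isPMF_pDist {B : Finset ℕ} (hB : B.Nonempty) {γ : ℝ} (hγ0 : 0 ≤ γ) (hγ1 : γ ≤ 1)
    (j : ℕ) : IsPMF (pDist γ B j) := by
  refine ⟨fun x => ?_, (hasSum_pDist hB γ j).tsum_eq⟩
  unfold pDist
  have : 0 ≤ γ / #B := by positivity
  split_ifs <;> linarith

lemma pDist_row (γ : ℝ) (B : Finset ℕ) (j x : ℕ) :
    pDist γ B j (x, 2 * j + 1) = if x ∈ B then γ / #B else 0 := by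
  simp [pDist]

lemma qDist_sub_mul_pDist (A : ℕ → Finset ℕ) (i j k : ℕ) (η γ : ℝ) (x : ℕ × ℕ) :
    qDist A i j k x - (1 - η) * pDist γ (A i) j x =
      (if x = (0, 0) then η + (1 - η) * γ - 1 / (j : ℝ) else 0) +
      (if x.1 ∈ A i ∧ x.2 = 2 * j + 1
        then (1 / (j : ℝ) - 1 / k - (1 - η) * γ) / #(A i) else 0) +
      (if x = (i, 2 * j + 2) then 1 / (k : ℝ) else 0) := by
  simp only [qDist, pDist]
  split_ifs <;> ring

/-- The corruption `q` is `(q_{i,j,k} - (1 - η) p) / η`; the two inequalities on `γ` say that it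
is nonnegative at the atom `(0,0)` and on the block `A i × {2j+1}`. -/
lemma exists_mix_pDist_eq_qDist (A : ℕ → Finset ℕ) {i : ℕ} (hA : (A i).Nonempty) {j k : ℕ}
    {η γ : ℝ} (hη : 0 < η) (hblock : (1 - η) * γ ≤ 1 / j - 1 / k)
    (hatom : 1 / j ≤ η + (1 - η) * γ) :
    ∃ q, IsPMF q ∧ mix η q (pDist γ (A i) j) = qDist A i j k := by
  refine ⟨fun x => (qDist A i j k x - (1 - η) * pDist γ (A i) j x) / η, ⟨fun x => ?_, ?_⟩, ?_⟩
  · dsimp only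
    rw [qDist_sub_mul_pDist]
    have : 0 ≤ (1 / (j : ℝ) - 1 / k - (1 - η) * γ) / #(A i) :=
      div_nonneg (by linarith) (Nat.cast_nonneg _)
    have : (0 : ℝ) ≤ 1 / k := by positivity
    apply div_nonneg _ hη.le
    split_ifs <;> linarith
  · have := ((hasSum_qDist A hA j k).sub ((hasSum_pDist hA γ j).mul_left (1 - η))).div_const η
    rw [this.tsum_eq]
    field_simp
    ring
  · funext x
    simp only [mix]
    field_simp
    ring

lemma sub_le_sum_row_of_dTV_pDist_le {f : ℕ × ℕ → ℝ} (hf : Summable f) {T V : Finset ℕ}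
    {N n j : ℕ} (hTN : #T = N) (hTne : T.Nonempty) (hVn : #V ≤ n) {γ r : ℝ} (hγ : 0 ≤ γ)
    (hdTV : dTV f (pDist γ T j) ≤ r) :
    γ * (N - n) / N - 2 * r ≤ ∑ x ∈ T \ V, f (x, 2 * j + 1) := by
  have hN : (0 : ℝ) < N := by rw [← hTN]; exact_mod_cast hTne.card_pos
  have hclose : ∑ x ∈ T \ V, (pDist γ T j (x, 2 * j + 1) - f (x, 2 * j + 1)) ≤ 2 * r := by
    have := sum_abs_sub_le_two_mul_dTV hf (hasSum_pDist hTne γ j).summable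
      ((T \ V).image (·, 2 * j + 1))
    rw [sum_image fun x _ y _ h => (Prod.ext_iff.mp h).1] at this
    refine (sum_le_sum fun x _ => ?_).trans (this.trans (by linarith))
    rw [abs_sub_comm]
    exact le_abs_self _
  have hmass : ∑ x ∈ T \ V, pDist γ T j (x, 2 * j + 1) = #(T \ V) * (γ / N) := by
    rw [sum_congr rfl fun x hx => by rw [pDist_row, if_pos (mem_sdiff.mp hx).1, hTN],
      sum_const, nsmul_eq_mul]
  have hcard : (N : ℝ) - n ≤ #(T \ V) := by
    have : #T ≤ #(T \ V) + #V := card_le_card_sdiff_add_card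
    have : (N : ℝ) ≤ #(T \ V) + n := by rw [← hTN]; exact_mod_cast this.trans (by omega)
    linarith
  have : γ * (N - n) / N ≤ #(T \ V) * (γ / N) := by
    rw [mul_div_assoc', div_le_div_iff_of_pos_right hN, mul_comm]
    exact mul_le_mul_of_nonneg_right hcard hγ
  rw [sum_sub_distrib, hmass] at hclose
  linarith

lemma card_filter_dTV_pDist_le {f : ℕ × ℕ → ℝ} (hf : IsPMF f) {V : Finset ℕ} {M N n j : ℕ}
    (hV : V ⊆ range M) (hVn : #V ≤ n) (hnN : n < N) (hNM : N ≤ M) {γ r c : ℝ} (hγ : 0 ≤ γ)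
    (hcγ : c ≤ γ * (N - n) / N - 2 * r) (hc : 0 < c) :
    c * (M - n) * #{T ∈ (range M).powersetCard N | V ⊆ T ∧ dTV f (pDist γ T j) ≤ r} ≤
      N * #{T ∈ (range M).powersetCard N | V ⊆ T} := by
  set good := {T ∈ (range M).powersetCard N | V ⊆ T ∧ dTV f (pDist γ T j) ≤ r}
  set C := (M - #V - 1).choose (N - #V - 1)
  have hgood : ∀ T ∈ good, c ≤ ∑ x ∈ T \ V, f (x, 2 * j + 1) := by
    intro T hT
    obtain ⟨hTM, ⟨-, hdTV⟩⟩ := mem_filter.mp hT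
    have hTN := (mem_powersetCard.mp hTM).2
    have hTne : T.Nonempty := card_pos.mp (by omega)
    exact hcγ.trans (sub_le_sum_row_of_dTV_pDist_le hf.summable hTN hTne hVn hγ hdTV)
  have hmarkov : c * #good ≤ C := calc
    c * #good = ∑ _T ∈ good, c := by rw [sum_const, nsmul_eq_mul, mul_comm]
    _ ≤ ∑ T ∈ good, ∑ x ∈ T \ V, f (x, 2 * j + 1) := sum_le_sum hgood
    _ ≤ ∑ T ∈ (range M).powersetCard N with V ⊆ T, ∑ x ∈ T \ V, f (x, 2 * j + 1) :=
      sum_le_sum_of_subset_of_nonneg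
        (fun T hT => mem_filter.mpr ⟨(mem_filter.mp hT).1, (mem_filter.mp hT).2.1⟩)
        fun T _ _ => sum_nonneg fun x _ => hf.1 _
    _ = C * ∑ x ∈ range M \ V, f (x, 2 * j + 1) := by
      rw [sum_sum_sdiff_filter_powersetCard_subset hV (by omega), card_range]
    _ ≤ C := mul_le_of_le_one_right (Nat.cast_nonneg _)
      (hf.sum_comp_le_one (fun x y h => (Prod.ext_iff.mp h).1) _)
  have hratio : (C : ℝ) * (M - #V) = #{T ∈ (range M).powersetCard N | V ⊆ T} * (N - #V) := by
    have hC : C * (M - #V) = (M - #V).choose (N - #V) * (N - #V) :=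
      Nat.choose_sub_one_mul (by omega)
    rw [card_filter_powersetCard_subset V (range M) N hV (by omega), card_range,
      ← Nat.cast_sub (by omega : #V ≤ M), ← Nat.cast_sub (by omega : #V ≤ N)]
    exact_mod_cast hC
  have hVn' : (#V : ℝ) ≤ n := by exact_mod_cast hVn
  have hnM : (n : ℝ) ≤ M := by exact_mod_cast (hnN.trans_le hNM).le
  have hgood0 : (0 : ℝ) ≤ #good := Nat.cast_nonneg _
  have htV0 : (0 : ℝ) ≤ #{T ∈ (range M).powersetCard N | V ⊆ T} := Nat.cast_nonneg _
  calc c * (M - n) * #good ≤ c * #good * (M - #V) := by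
        rw [mul_right_comm]
        exact mul_le_mul_of_nonneg_left (by linarith) (mul_nonneg hc.le hgood0)
    _ ≤ C * (M - #V) := by gcongr; linarith
    _ = #{T ∈ (range M).powersetCard N | V ⊆ T} * (N - #V) := hratio
    _ ≤ N * #{T ∈ (range M).powersetCard N | V ⊆ T} := by
        nlinarith [mul_nonneg htV0 (Nat.cast_nonneg (α := ℝ) #V)]

def pDistSupport (M j : ℕ) : Finset (ℕ × ℕ) :=
  insert (0, 0) ((range M).image (·, 2 * j + 1))

lemma pDist_eq_zero_of_notMem {γ : ℝ} {B : Finset ℕ} {M j : ℕ} (hB : B ⊆ range M)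
    {x : ℕ × ℕ} (hx : x ∉ pDistSupport M j) : pDist γ B j x = 0 := by
  simp only [pDistSupport, mem_insert, mem_image, mem_range, not_or, not_exists] at hx
  have hrow : ¬(x.1 ∈ B ∧ x.2 = 2 * j + 1) := fun ⟨h1, h2⟩ =>
    hx.2 x.1 ⟨mem_range.mp (hB h1), by rw [← h2]⟩
  simp [pDist, hx.1, hrow]

section Sample

variable {n : ℕ}

def seenSet (j : ℕ) (S : Fin n → ℕ × ℕ) : Finset ℕ :=
  (univ.filter fun i => (S i).2 = 2 * j + 1).image fun i => (S i).1

lemma card_seenSet_le (j : ℕ) (S : Fin n → ℕ × ℕ) : #(seenSet j S) ≤ n :=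
  card_image_le.trans <| (card_filter_le _ _).trans (card_fin n).le

lemma seenSet_subset_range {M j : ℕ} {S : Fin n → ℕ × ℕ}
    (hS : S ∈ Fintype.piFinset fun _ => pDistSupport M j) : seenSet j S ⊆ range M := by
  intro x hx
  obtain ⟨i, hi, rfl⟩ := mem_image.mp hx
  have hrow := (mem_filter.mp hi).2
  have := Fintype.mem_piFinset.mp hS i
  simp only [pDistSupport, mem_insert, mem_image] at this
  rcases this with h0 | ⟨y, hy, hyi⟩
  · simp [h0] at hrow
  · rwa [← hyi]

noncomputable def sampleWeight (γ : ℝ) (N : ℕ) (S : Fin n → ℕ × ℕ) : ℝ :=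
  ∏ i, if S i = (0, 0) then 1 - γ else γ / N

lemma sampleWeight_nonneg {γ : ℝ} (hγ0 : 0 ≤ γ) (hγ1 : γ ≤ 1) (N : ℕ) (S : Fin n → ℕ × ℕ) :
    0 ≤ sampleWeight γ N S :=
  prod_nonneg fun i _ => by split_ifs <;> [linarith; positivity]

lemma prod_pDist_eq_ite {γ : ℝ} {T : Finset ℕ} {M N j : ℕ} (hTN : #T = N) {S : Fin n → ℕ × ℕ}
    (hS : S ∈ Fintype.piFinset fun _ => pDistSupport M j) :
    ∏ i, pDist γ T j (S i) = if seenSet j S ⊆ T then sampleWeight γ N S else 0 := by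
  have hrow : ∀ i, S i ≠ (0, 0) → S i = ((S i).1, 2 * j + 1) ∧ (S i).1 ∈ seenSet j S := by
    intro i hi
    have := Fintype.mem_piFinset.mp hS i
    simp only [pDistSupport, mem_insert, mem_image] at this
    obtain ⟨y, -, hy⟩ := this.resolve_left hi
    have hS2 : (S i).2 = 2 * j + 1 := by rw [← hy]
    exact ⟨Prod.ext rfl hS2, mem_image.mpr ⟨i, mem_filter.mpr ⟨mem_univ i, hS2⟩, rfl⟩⟩
  split_ifs with hseen
  · refine prod_congr rfl fun i _ => ?_
    by_cases h0 : S i = (0, 0)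
    · simp [h0, pDist]
    · obtain ⟨hSi, hx⟩ := hrow i h0
      rw [if_neg h0, hSi, pDist_row, if_pos (hseen hx), hTN]
  · obtain ⟨x, hx, hxT⟩ := not_subset.mp hseen
    obtain ⟨i, hi, rfl⟩ := mem_image.mp hx
    have h0 : S i ≠ (0, 0) := fun h => by simp [h] at hi
    refine prod_eq_zero (mem_univ i) ?_
    rw [(hrow i h0).1, pDist_row, if_neg hxT]

lemma iidProb_pDist_eq_sum {γ : ℝ} {T : Finset ℕ} {M N j : ℕ} (hT : T ⊆ range M) (hTN : #T = N)
    (E : Set (Fin n → ℕ × ℕ)) :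
    iidProb (pDist γ T j) n E = ∑ S ∈ Fintype.piFinset (fun _ => pDistSupport M j),
      E.indicator (fun S => if seenSet j S ⊆ T then sampleWeight γ N S else 0) S := by
  rw [iidProb_eq_sum_piFinset (fun x hx => pDist_eq_zero_of_notMem hT hx)]
  refine sum_congr rfl fun S hS => ?_
  by_cases hE : S ∈ E <;> simp [hE, prod_pDist_eq_ite hTN hS]

lemma iidProb_pDist_univ {γ : ℝ} {T : Finset ℕ} {M : ℕ} (hT : T ⊆ range M) (hTne : T.Nonempty)
    (j : ℕ) : iidProb (pDist γ T j) n Set.univ = 1 := by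
  have hzero : ∀ x ∉ pDistSupport M j, pDist γ T j x = 0 := fun x hx =>
    pDist_eq_zero_of_notMem hT hx
  have hsum : ∑ x ∈ pDistSupport M j, pDist γ T j x = 1 :=
    (hasSum_pDist hTne γ j).unique (hasSum_sum_of_ne_finset_zero hzero) |>.symm
  rw [iidProb_eq_sum_piFinset hzero]
  simp only [Set.indicator_univ]
  rw [← prod_univ_sum, hsum, prod_const_one]

lemma sum_iidProb_dTV_pDist_le (L : (Fin n → ℕ × ℕ) → ℕ × ℕ → ℝ) {M N j : ℕ} (hN : 0 < N)
    {γ r β : ℝ} (hγ0 : 0 ≤ γ) (hγ1 : γ ≤ 1)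
    (hβ : ∀ S ∈ Fintype.piFinset (fun _ => pDistSupport M j),
      (#{T ∈ (range M).powersetCard N | seenSet j S ⊆ T ∧ dTV (L S) (pDist γ T j) ≤ r} : ℝ) ≤
        β * #{T ∈ (range M).powersetCard N | seenSet j S ⊆ T}) :
    ∑ T ∈ (range M).powersetCard N, iidProb (pDist γ T j) n {S | dTV (L S) (pDist γ T j) ≤ r} ≤
      β * #((range M).powersetCard N) := by
  set TT := (range M).powersetCard N
  set PA := Fintype.piFinset (fun _ : Fin n => pDistSupport M j)
  set w := sampleWeight (n := n) γ N
  have hTT : ∀ T ∈ TT, T ⊆ range M ∧ #T = N ∧ T.Nonempty := fun T hT =>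
    have h := mem_powersetCard.mp hT
    ⟨h.1, h.2, card_pos.mp (h.2 ▸ hN)⟩
  have hsplit : ∀ T ∈ TT,
      iidProb (pDist γ T j) n {S | dTV (L S) (pDist γ T j) ≤ r} =
        ∑ S ∈ PA, if seenSet j S ⊆ T ∧ dTV (L S) (pDist γ T j) ≤ r then w S else 0 := by
    intro T hT
    obtain ⟨hTM, hTN, -⟩ := hTT T hT
    rw [iidProb_pDist_eq_sum hTM hTN]
    refine sum_congr rfl fun S _ => ?_
    by_cases hS : dTV (L S) (pDist γ T j) ≤ r <;> simp [hS, w]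
  have hone : ∀ T ∈ TT, ∑ S ∈ PA, (if seenSet j S ⊆ T then w S else 0) = 1 := by
    intro T hT
    obtain ⟨hTM, hTN, hTne⟩ := hTT T hT
    rw [← iidProb_pDist_univ (γ := γ) (n := n) hTM hTne j, iidProb_pDist_eq_sum hTM hTN]
    simp [w, PA]
  calc ∑ T ∈ TT, iidProb (pDist γ T j) n {S | dTV (L S) (pDist γ T j) ≤ r}
      = ∑ S ∈ PA, w S * #{T ∈ TT | seenSet j S ⊆ T ∧ dTV (L S) (pDist γ T j) ≤ r} := by
        rw [sum_congr rfl hsplit, sum_comm]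
        refine sum_congr rfl fun S _ => ?_
        rw [← sum_filter, sum_const, nsmul_eq_mul, mul_comm]
    _ ≤ ∑ S ∈ PA, w S * (β * #{T ∈ TT | seenSet j S ⊆ T}) :=
        sum_le_sum fun S hS =>
          mul_le_mul_of_nonneg_left (hβ S hS) (sampleWeight_nonneg hγ0 hγ1 N S)
    _ = β * ∑ T ∈ TT, ∑ S ∈ PA, if seenSet j S ⊆ T then w S else 0 := by
        rw [sum_comm (s := TT), mul_sum]
        refine sum_congr rfl fun S _ => ?_
        rw [← sum_filter, sum_const, nsmul_eq_mul]
        ring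
    _ = β * #TT := by
        rw [sum_congr rfl hone, sum_const, nsmul_eq_mul, mul_one]

theorem exists_iidProb_dTV_pDist_lt_half (L : (Fin n → ℕ × ℕ) → ℕ × ℕ → ℝ)
    (hL : ∀ S, IsPMF (L S)) (j : ℕ) {γ r : ℝ} (hγ0 : 0 ≤ γ) (hγ1 : γ ≤ 1) (hγr : 4 * r < γ) :
    ∃ T : Finset ℕ, T.Nonempty ∧
      iidProb (pDist γ T j) n {S | dTV (L S) (pDist γ T j) ≤ r} < 1 / 2 := by
  set c := γ / 2 - 2 * r with hc_def
  have hc : 0 < c := by linarith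
  set N := 2 * n + 1
  set M := n + 3 * N * ⌈1 / c⌉₊
  have hnN : n < N := by omega
  have hNM : N ≤ M := by
    have := Nat.mul_le_mul_left (3 * N) (Nat.one_le_ceil_iff.mpr (one_div_pos.mpr hc))
    omega
  have hcγ : c ≤ γ * (N - n) / N - 2 * r := by
    have : γ / 2 ≤ γ * (N - n) / N := by
      rw [le_div_iff₀ (by positivity)]
      push_cast [N]
      nlinarith
    linarith
  have hM : 3 * (N : ℝ) ≤ c * (M - n) := by
    have hceil : 1 ≤ c * ⌈1 / c⌉₊ := by
      have := Nat.le_ceil (1 / c)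
      rwa [div_le_iff₀ hc, mul_comm] at this
    have : (M : ℝ) - n = 3 * N * ⌈1 / c⌉₊ := by push_cast [M]; ring
    rw [this]
    nlinarith [(Nat.cast_nonneg (α := ℝ) N)]
  have hTT : (0 : ℝ) < #((range M).powersetCard N) := by
    rw [card_powersetCard, card_range]
    exact_mod_cast Nat.choose_pos hNM
  have hsum := sum_iidProb_dTV_pDist_le L (by omega : 0 < N) (β := 1 / 3) (r := r) hγ0 hγ1
    fun S hS => by
      have := card_filter_dTV_pDist_le (j := j) (hL S) (seenSet_subset_range hS)
        (card_seenSet_le j S) hnN hNM hγ0 hcγ hc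
      have hN : (0 : ℝ) < N := by positivity
      nlinarith [Nat.cast_nonneg (α := ℝ)
        #{T ∈ (range M).powersetCard N | seenSet j S ⊆ T ∧ dTV (L S) (pDist γ T j) ≤ r}]
  by_contra! h
  have : 1 / 2 * (#((range M).powersetCard N) : ℝ) ≤
      ∑ T ∈ (range M).powersetCard N,
        iidProb (pDist γ T j) n {S | dTV (L S) (pDist γ T j) ≤ r} := by
    rw [mul_comm, ← nsmul_eq_mul, ← sum_const]
    exact sum_le_sum fun T hT =>
      h T (card_pos.mp ((mem_powersetCard.mp hT).2 ▸ (by omega : 0 < N)))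
  linarith

end Sample

lemma exists_nat_one_le_mul_sq_lt_four {t : ℝ} (ht0 : 0 < t) (ht4 : t < 4) :
    ∃ j : ℕ, 1 ≤ j ∧ 1 ≤ t * j ^ 2 ∧ t * j ^ 2 < 4 := by
  have hex : ∃ j : ℕ, 1 ≤ t * j ^ 2 := by
    obtain ⟨j, hj⟩ := exists_nat_ge (1 / t)
    rw [div_le_iff₀ ht0] at hj
    exact ⟨j + 1, by push_cast; nlinarith [(Nat.cast_nonneg (α := ℝ) j)]⟩
  have hj := Nat.find_spec hex
  have hj1 : 1 ≤ Nat.find hex := Nat.one_le_iff_ne_zero.mpr fun h => by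
    rw [h] at hj
    norm_num at hj
  refine ⟨Nat.find hex, hj1, hj, ?_⟩
  rcases hj1.eq_or_lt with h | h
  · rw [← h]
    simpa using ht4
  · have hprev := Nat.find_min hex (Nat.sub_one_lt_of_lt h)
    have hcast : ((Nat.find hex - 1 : ℕ) : ℝ) = Nat.find hex - 1 := by
      rw [Nat.cast_sub hj1, Nat.cast_one]
    have h2 : (2 : ℝ) ≤ Nat.find hex := by exact_mod_cast h
    rw [hcast, not_le] at hprev
    nlinarith

lemma exists_mixing_weight {η u v : ℝ} (hη0 : 0 < η) (hη1 : η < 1) (hvη : v ≤ η) (hvu : v ≤ u)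
    (hu1 : u ≤ 1) :
    ∃ γ, 0 ≤ γ ∧ γ ≤ 1 ∧ min 1 (u - v) ≤ γ ∧ (1 - η) * γ ≤ u - v ∧ u ≤ η + (1 - η) * γ := by
  have h1η : 0 < 1 - η := by linarith
  refine ⟨min 1 ((u - v) / (1 - η)), le_min zero_le_one (div_nonneg (by linarith) h1η.le),
    min_le_left _ _, min_le_min_left _ ?_, ?_, ?_⟩
  · rw [le_div_iff₀ h1η]
    nlinarith
  · calc (1 - η) * min 1 ((u - v) / (1 - η)) ≤ (1 - η) * ((u - v) / (1 - η)) :=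
          mul_le_mul_of_nonneg_left (min_le_right _ _) h1η.le
      _ = u - v := mul_div_cancel₀ _ h1η.ne'
  · rcases min_choice 1 ((u - v) / (1 - η)) with h | h <;> rw [h]
    · linarith
    · rw [mul_div_cancel₀ _ h1η.ne']
      linarith

/-- Choosing `⌈32α⌉ j² η ∈ [1, 4)` gives `1/k ≤ η` for `k = ⌈32α⌉ j²`, and `1/j > 8αη`. -/
lemma exists_hard_parameters {α η : ℝ} (hα : 1 < α) (hη : 0 < η) (hαη : α * η ≤ 1 / 16) :
    ∃ j : ℕ, 1 ≤ j ∧ ∃ γ : ℝ, 0 ≤ γ ∧ γ ≤ 1 ∧ 7 * (α * η) ≤ γ ∧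
      (1 - η) * γ ≤ 1 / j - 1 / ((⌈32 * α⌉₊ * j ^ 2 : ℕ) : ℝ) ∧ 1 / j ≤ η + (1 - η) * γ := by
  set K := ⌈32 * α⌉₊
  have hK : 32 * α ≤ K := Nat.le_ceil _
  have hK' : (K : ℝ) < 32 * α + 1 := Nat.ceil_lt_add_one (by positivity)
  have hη1 : η < 1 / 16 := by nlinarith
  obtain ⟨j, hj1, hlow, hup⟩ := exists_nat_one_le_mul_sq_lt_four (t := K * η)
    (by positivity) (by nlinarith)
  have hj : (1 : ℝ) ≤ j := by exact_mod_cast hj1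
  have hjj : (j : ℝ) ≤ j ^ 2 := by nlinarith
  have hk : ((K * j ^ 2 : ℕ) : ℝ) = K * j ^ 2 := by push_cast; ring
  have h32 : 32 * (j : ℝ) ≤ K * j ^ 2 := by nlinarith
  have hv : 1 / ((K * j ^ 2 : ℕ) : ℝ) ≤ 1 / 32 * (1 / j) := by
    rw [hk, div_mul_div_comm, one_mul]
    exact one_div_le_one_div_of_le (by positivity) h32
  have hu : 8 * (α * η) < 1 / j := by
    have : 32 * α * (η * j ^ 2) ≤ K * (η * j ^ 2) := mul_le_mul_of_nonneg_right hK (by positivity)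
    have : 8 * (α * η) * j ≤ 8 * (α * η) * j ^ 2 := mul_le_mul_of_nonneg_left hjj (by positivity)
    rw [lt_div_iff₀ (by positivity)]
    nlinarith
  have hu0 : 0 < 1 / (j : ℝ) := by positivity
  have hu1 : 1 / (j : ℝ) ≤ 1 := (div_le_one (by positivity)).mpr hj
  obtain ⟨γ, hγ0, hγ1, hγ, hblock, hatom⟩ := exists_mixing_weight hη (by linarith)
    (v := 1 / ((K * j ^ 2 : ℕ) : ℝ)) (u := 1 / j)
    (by rw [hk, div_le_iff₀ (by positivity)]; linarith) (by linarith) hu1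
  refine ⟨j, hj1, γ, hγ0, hγ1, ?_, hblock, hatom⟩
  refine le_trans (le_min (by linarith) ?_) hγ
  have : (0 : ℝ) < α * η := by positivity
  linarith

theorem Qg_quadratic_not_eta_subtractively_robust_general
    (A : ℕ → Finset ℕ)
    (hA_surj : ∀ s : Finset ℕ, s.Nonempty → ∃ i, A i = s)
    (α : ℝ) (hα : 1 < α) (η : ℝ) (hη : 0 < η) (hη' : η ≤ 1 / (16 * α)) :
    ¬ EtaSubtractiveRobustlyLearnable
        (Qg A (fun t => ⌈(32:ℝ) * α⌉₊ * t ^ 2)) η α := by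
  rintro ⟨L, hL, nC, hnC⟩
  have hαη : α * η ≤ 1 / 16 := by
    rw [le_div_iff₀ (by positivity)] at hη'
    linarith
  have hαη0 : 0 < α * η := by positivity
  obtain ⟨j, hj, γ, hγ0, hγ1, hγ, hblock, hatom⟩ := exists_hard_parameters hα hη hαη
  set ε := α * η / 4 with hε
  set n := nC ε (1 / 2)
  obtain ⟨T, hTne, hfail⟩ := exists_iidProb_dTV_pDist_lt_half (L n) (hL n) j hγ0 hγ1
    (r := α * η + ε) (by linarith)
  obtain ⟨i, rfl⟩ := hA_surj T hTne
  obtain ⟨q, hq, hmix⟩ := exists_mix_pDist_eq_qDist A hTne hη hblock hatom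
  have hsucc := hnC _ (isPMF_pDist hTne hγ0 hγ1 j) ⟨q, hq, hmix ▸ ⟨i, j, hj, rfl⟩⟩
    ε ⟨by positivity, by linarith⟩ (1 / 2) ⟨by norm_num, by norm_num⟩ n le_rfl
  linarith

/-- for `α > 1` and `g(t) = ⌈32α⌉·t²`, the class `Q_g` is not
`η`-subtractive `α`-robustly learnable for any `0 < η ≤ 1/(16α)`. -/
theorem Qg_quadratic_not_eta_subtractively_robust
    (A : ℕ → Finset ℕ) (hA_ne : ∀ i, (A i).Nonempty) (hA_inj : Function.Injective A)
    (hA_surj : ∀ s : Finset ℕ, s.Nonempty → ∃ i, A i = s)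
    (α : ℝ) (hα : 1 < α) (η : ℝ) (hη : 0 < η) (hη' : η ≤ 1 / (16 * α)) :
    ¬ EtaSubtractiveRobustlyLearnable
        (Qg A (fun t => ⌈(32:ℝ) * α⌉₊ * t ^ 2)) η α :=
  Qg_quadratic_not_eta_subtractively_robust_general A hA_surj α hα η hη hη'

end RobustDistLearn
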